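/- arXiv:2103.14614 — 4 statements merged into one kernel-verified Lean document; each statement's English description precedes it below -/
import Mathlib

section
/- Let u, b : 𝕋 → ℝ be continuous with |u(y)| < b(y) for all y. If Φ ∈ H¹(𝕋) is complex-valued, c = c_r + i·c_i ∈ ℂ with c_i ≠ 0, and ∫_𝕋 ((u(y)−c)² − b(y)²)(|Φ'(y)|² + α²|Φ(y)|²) dy = 0 (with the complex square (u−c)²), then Φ ≡ 0. -/
open MeasureTheory

/- The imaginary part of the hypothesis gives `∫ (u - Re c) W = 0`, and adding
`2 Re c` times it to the real part gives `∫ (|c|² + b² - u²) W = 0` with `W = |Φ'|² + α²|Φ|²`.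
Since `u² < b²` the factor `|c|² + b² - u²` is positive, so the continuous weight `W ≥ 0`
vanishes on a period, and with it `Φ`. -/

/- A non-real root of a real quadratic comes with its conjugate, so by Vieta `|c|²` is the
product of the roots. -/
theorem Complex.normSq_mul_eq_of_quadratic_eq_zero {A B C : ℝ} {c : ℂ} (hc : c.im ≠ 0)
    (h : (C : ℂ) * c ^ 2 - 2 * B * c + A = 0) : Complex.normSq c * C = A := by
  have hre := congrArg Complex.re h
  have him := congrArg Complex.im h
  simp only [Complex.add_re, Complex.sub_re, Complex.mul_re, Complex.add_im, Complex.sub_im,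
    Complex.mul_im, Complex.ofReal_re, Complex.ofReal_im, Complex.re_ofNat, Complex.im_ofNat,
    pow_two, Complex.zero_re, Complex.zero_im, zero_mul, mul_zero, sub_zero, add_zero] at hre him
  have hB : B = C * c.re := by
    apply mul_left_cancel₀ hc
    linear_combination -him / 2
  rw [Complex.normSq_apply]
  linear_combination (-1 : ℝ) * hre - 2 * c.re * hB

section

variable {X : Type*} [MeasurableSpace X] {μ : Measure X} {u b w : X → ℝ}

theorem integral_sub_sq_sub_sq_mul (hw : Integrable w μ) (huw : Integrable (fun x ↦ u x * w x) μ)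
    (hubw : Integrable (fun x ↦ (u x ^ 2 - b x ^ 2) * w x) μ) (c : ℂ) :
    ∫ x, (((u x : ℂ) - c) ^ 2 - (b x : ℂ) ^ 2) * (w x : ℂ) ∂μ =
      (∫ x, w x ∂μ : ℝ) * c ^ 2 - 2 * (∫ x, u x * w x ∂μ : ℝ) * c +
        (∫ x, (u x ^ 2 - b x ^ 2) * w x ∂μ : ℝ) := by
  have hpt : ∀ x, (((u x : ℂ) - c) ^ 2 - (b x : ℂ) ^ 2) * (w x : ℂ) =
      c ^ 2 * (w x : ℂ) - 2 * c * ((u x * w x : ℝ) : ℂ) + ((u x ^ 2 - b x ^ 2) * w x : ℝ) := by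
    intro x; push_cast; ring
  have hw' := hw.ofReal (𝕜 := ℂ)
  have huw' := huw.ofReal (𝕜 := ℂ)
  have hubw' := hubw.ofReal (𝕜 := ℂ)
  simp_rw [hpt]
  rw [integral_add, integral_sub, integral_const_mul, integral_const_mul, integral_complex_ofReal,
    integral_complex_ofReal, integral_complex_ofReal]
  · ring
  · exact hw'.const_mul _
  · exact huw'.const_mul _
  · exact (hw'.const_mul _).sub (huw'.const_mul _)
  · exact hubw'

theorem integral_normSq_add_sq_sub_sq_mul_eq_zero (hw : Integrable w μ)
    (huw : Integrable (fun x ↦ u x * w x) μ)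
    (hubw : Integrable (fun x ↦ (u x ^ 2 - b x ^ 2) * w x) μ) {c : ℂ} (hc : c.im ≠ 0)
    (h : ∫ x, (((u x : ℂ) - c) ^ 2 - (b x : ℂ) ^ 2) * (w x : ℂ) ∂μ = 0) :
    ∫ x, (Complex.normSq c + b x ^ 2 - u x ^ 2) * w x ∂μ = 0 := by
  rw [integral_sub_sq_sub_sq_mul hw huw hubw] at h
  have hvieta := Complex.normSq_mul_eq_of_quadratic_eq_zero hc h
  have hpt : ∀ x, (Complex.normSq c + b x ^ 2 - u x ^ 2) * w x =
      Complex.normSq c * w x - (u x ^ 2 - b x ^ 2) * w x := fun x ↦ by ring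
  simp_rw [hpt]
  rw [integral_sub (hw.const_mul _) hubw, integral_const_mul, hvieta, sub_self]

end

theorem eq_zero_of_intervalIntegral_eq_zero_of_nonneg {f : ℝ → ℝ} {a b : ℝ} (hab : a < b)
    (hf : ContinuousOn f (Set.Icc a b)) (hf0 : ∀ x ∈ Set.Icc a b, 0 ≤ f x)
    (h : ∫ x in a..b, f x = 0) : ∀ x ∈ Set.Icc a b, f x = 0 := by
  intro x hx
  by_contra hne
  have hpos := intervalIntegral.integral_pos hab hf
    (fun y hy ↦ hf0 y (Set.Ioc_subset_Icc_self hy)) ⟨x, hx, (hf0 x hx).lt_of_ne' hne⟩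
  exact hpos.ne' h

theorem stmt_0_general
    (u b : ℝ → ℝ) (hu : Continuous u) (hb : Continuous b)
    (hub : ∀ y, |u y| < b y)
    (Φ Φ' : ℝ → ℂ) (hΦ : Continuous Φ) (hΦ' : Continuous Φ')
    (hΦp : Function.Periodic Φ (2 * Real.pi))
    (α : ℝ) (hα : α ≠ 0)
    (c : ℂ) (hc : c.im ≠ 0)
    (hint : ∫ y in (0:ℝ)..(2 * Real.pi),
        ((((u y : ℂ)) - c) ^ 2 - ((b y : ℂ)) ^ 2) *
          (((‖Φ' y‖ ^ 2 + α ^ 2 * ‖Φ y‖ ^ 2 : ℝ)) : ℂ) = 0) :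
    ∀ y, Φ y = 0 := by
  set W : ℝ → ℝ := fun y ↦ ‖Φ' y‖ ^ 2 + α ^ 2 * ‖Φ y‖ ^ 2
  have hgap : ∀ y, 0 < Complex.normSq c + b y ^ 2 - u y ^ 2 := fun y ↦ by
    nlinarith [sq_lt_sq' (neg_lt_of_abs_lt (hub y)) (lt_of_abs_lt (hub y)), Complex.normSq_nonneg c]
  have hzero : ∫ y in (0:ℝ)..(2 * Real.pi), (Complex.normSq c + b y ^ 2 - u y ^ 2) * W y = 0 := by
    rw [intervalIntegral.integral_of_le Real.two_pi_pos.le] at hint ⊢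
    exact integral_normSq_add_sq_sub_sq_mul_eq_zero (by fun_prop : Continuous W).integrableOn_Ioc
      (by fun_prop : Continuous fun y ↦ u y * W y).integrableOn_Ioc
      (by fun_prop : Continuous fun y ↦ (u y ^ 2 - b y ^ 2) * W y).integrableOn_Ioc hc hint
  have hW : ∀ y ∈ Set.Icc 0 (2 * Real.pi), W y = 0 := fun y hy ↦
    (mul_eq_zero.mp (eq_zero_of_intervalIntegral_eq_zero_of_nonneg Real.two_pi_pos
      (by fun_prop) (fun x _ ↦ mul_nonneg (hgap x).le (by positivity)) hzero y hy)).resolve_left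
      (hgap y).ne'
  intro y
  obtain ⟨z, hz, hzy⟩ := hΦp.exists_mem_Ico₀ Real.two_pi_pos y
  have hΦz : α ^ 2 * ‖Φ z‖ ^ 2 = 0 := ((add_eq_zero_iff_of_nonneg (by positivity)
    (by positivity)).mp (hW z (Set.Ico_subset_Icc_self hz))).2
  simpa [hzy, hα] using hΦz

/-- If `u, b` are continuous `2π`-periodic profiles with `|u| < b`,
`Φ` is a `C¹` periodic complex function, `c` has nonzero imaginary part, and
`∫ ((u-c)² - b²)(|Φ'|² + α²|Φ|²) = 0`, then `Φ ≡ 0`. -/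
theorem stmt_0
    (u b : ℝ → ℝ) (hu : Continuous u) (hb : Continuous b)
    (hub : ∀ y, |u y| < b y)
    (hup : Function.Periodic u (2 * Real.pi)) (hbp : Function.Periodic b (2 * Real.pi))
    (Φ Φ' : ℝ → ℂ) (hΦ : Continuous Φ) (hΦ' : Continuous Φ')
    (hΦp : Function.Periodic Φ (2 * Real.pi))
    (hderiv : ∀ y, HasDerivAt Φ (Φ' y) y)
    (α : ℝ) (hα : α ≠ 0)
    (c : ℂ) (hc : c.im ≠ 0)
    (hint : ∫ y in (0:ℝ)..(2 * Real.pi),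
        ((((u y : ℂ)) - c) ^ 2 - ((b y : ℂ)) ^ 2) *
          (((‖Φ' y‖ ^ 2 + α ^ 2 * ‖Φ y‖ ^ 2 : ℝ)) : ℂ) = 0) :
    ∀ y, Φ y = 0 :=
  stmt_0_general u b hu hb hub Φ Φ' hΦ hΦ' hΦp α hα c hc hint
end

section
/- Let w : 𝕋 → ℝ be C³ such that every critical point of w is non-degenerate (w'(y)=0 implies w''(y)≠0). Then for every α ≠ 0 and every g ∈ H¹(𝕋) there is a constant C (independent of t and g) such that ‖e^{−iα w(·) t} g(·)‖_{H^{-1}(𝕋)} ≤ C ⟨t⟩^{−1/2} ‖g‖_{H¹(𝕋)} for all t ≥ 0, where ⟨t⟩ = √(1+t²). -/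
/-!
Put `μ = -α t`, `h = g φ` and `P z = ∫₀^z e^{iμw}`. Integrating by parts,
`∫₀^{2π} e^{iμw} h = P(2π) h(2π) - ∫₀^{2π} P h'`, and `|h(2π)| + ‖h'‖_{L¹} ≲ ‖g‖_{H¹} ‖φ‖_{H¹}`
by the one-dimensional Sobolev embedding `H¹ ⊆ L^∞` and Cauchy–Schwarz. Everything therefore
reduces to the uniform bound `sup_z |P z| ≲ (1 + μ²)^{-1/4}`.

Since `w'` and `w''` never vanish together, compactness yields `ε > 0` and a length `ℓ` such that
on every interval of length `ℓ` in `[0, 2π]` either `|w'| ≥ ε/2`, where one integration by parts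
gives `O(|μ|⁻¹)`, or `|w''| ≥ ε/2`, where van der Corput's second-derivative test gives
`O(|μ|^{-1/2})`. Finitely many such intervals cover `[0, 2π]`.
-/

open Real Set MeasureTheory intervalIntegral Filter
open scoped Interval

section Elementary

variable {a b : ℝ}

theorem continuous_of_forall_hasDerivAt {E : Type*} [NormedAddCommGroup E] [NormedSpace ℝ E]
    {f f' : ℝ → E} (hf : ∀ y, HasDerivAt f (f' y) y) : Continuous f :=
  continuous_iff_continuousAt.2 fun y => (hf y).continuousAt

theorem intervalIntegrable_div_sq {f g : ℝ → ℝ} (hf : Continuous f) (hg : Continuous g)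
    (hab : a ≤ b) (hg0 : ∀ y ∈ Icc a b, g y ≠ 0) :
    IntervalIntegrable (fun y => f y / g y ^ 2) volume a b :=
  ContinuousOn.intervalIntegrable <| hf.continuousOn.div (hg.pow 2).continuousOn
    fun y hy => pow_ne_zero 2 (hg0 y (uIcc_of_le hab ▸ hy))

theorem exists_mem_Icc_nonpos_left_nonneg_right {f : ℝ → ℝ} (hf : ContinuousOn f (Icc a b))
    (hab : a ≤ b) : ∃ c ∈ Icc a b, (a < c → f c ≤ 0) ∧ (c < b → 0 ≤ f c) := by
  by_cases ha : 0 ≤ f a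
  · exact ⟨a, left_mem_Icc.2 hab, fun h => (lt_irrefl a h).elim, fun _ => ha⟩
  by_cases hb : f b ≤ 0
  · exact ⟨b, right_mem_Icc.2 hab, fun _ => hb, fun h => (lt_irrefl b h).elim⟩
  obtain ⟨c, hc, hc0⟩ := intermediate_value_Icc hab hf ⟨(not_le.1 ha).le, (not_le.1 hb).le⟩
  exact ⟨c, hc, fun _ => hc0.le, fun _ => hc0.ge⟩

theorem norm_integral_le_mul_of_norm_integral_le {E : Type*} [NormedAddCommGroup E]
    [NormedSpace ℝ E] {f : ℝ → E} {ℓ B : ℝ} (hf : ∀ x y, IntervalIntegrable f volume x y)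
    (hshort : ∀ x ∈ Icc a b, ∀ y ∈ Icc a b, x ≤ y → y - x ≤ ℓ → ‖∫ s in x..y, f s‖ ≤ B)
    (n : ℕ) :
    ∀ x ∈ Icc a b, ∀ y ∈ Icc a b, x ≤ y → y - x ≤ n * ℓ → ‖∫ s in x..y, f s‖ ≤ n * B := by
  induction n with
  | zero =>
    intro x _ y _ hxy hlen
    simp [le_antisymm (by simpa using hlen) hxy]
  | succ n ih =>
    intro x hx y hy hxy hlen
    push_cast at hlen ⊢
    have hℓ : 0 ≤ ℓ := by nlinarith [(n.cast_nonneg : (0 : ℝ) ≤ n)]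
    have hB : 0 ≤ B := by simpa using hshort x hx x hx le_rfl (by simpa using hℓ)
    rcases le_or_gt (y - x) ℓ with h | h
    · nlinarith [hshort x hx y hy hxy h, (n.cast_nonneg : (0 : ℝ) ≤ n)]
    have hmid : x + ℓ ∈ Icc a b := ⟨by linarith [hx.1], by linarith [hy.2]⟩
    rw [← integral_add_adjacent_intervals (hf x (x + ℓ)) (hf (x + ℓ) y)]
    calc _ ≤ B + n * B := (norm_add_le _ _).trans <| add_le_add
          (hshort x hx _ hmid (by linarith) (by linarith))
          (ih _ hmid y hy (by linarith) (by linarith))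
      _ = (n + 1) * B := by ring

theorem inv_le_rpow_neg_quarter {x y : ℝ} (hx : 0 < x) (hy : 0 < y) (h : x ≤ y ^ 4) :
    y⁻¹ ≤ x ^ (-(1 / 4 : ℝ)) := by
  rw [rpow_neg hx.le]
  refine inv_anti₀ (rpow_pos_of_pos hx _) ?_
  rw [one_div, rpow_inv_le_iff_of_pos hx.le hy.le (by norm_num)]
  exact_mod_cast h

theorem one_add_mul_sq_rpow_neg_quarter_le {α : ℝ} (hα : α ≠ 0) (t : ℝ) :
    (1 + (α * t) ^ 2) ^ (-(1 / 4 : ℝ))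
      ≤ (1 + α⁻¹ ^ 2) ^ (1 / 4 : ℝ) * (1 + t ^ 2) ^ (-(1 / 4 : ℝ)) := by
  have hc : 0 < 1 + α⁻¹ ^ 2 := by positivity
  have key : (1 + α⁻¹ ^ 2) * (1 + (α * t) ^ 2) = 1 + t ^ 2 + (α⁻¹ ^ 2 + (α * t) ^ 2) := by
    field_simp; ring
  have hle := rpow_le_rpow_of_nonpos (by positivity)
    (show 1 + t ^ 2 ≤ (1 + α⁻¹ ^ 2) * (1 + (α * t) ^ 2) by rw [key]; nlinarith [sq_nonneg α⁻¹])
    (by norm_num : -(1 / 4 : ℝ) ≤ 0)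
  rw [mul_rpow hc.le (by positivity)] at hle
  calc (1 + (α * t) ^ 2) ^ (-(1 / 4 : ℝ))
      = (1 + α⁻¹ ^ 2) ^ (1 / 4 : ℝ) * ((1 + α⁻¹ ^ 2) ^ (-(1 / 4 : ℝ))
          * (1 + (α * t) ^ 2) ^ (-(1 / 4 : ℝ))) := by
        rw [← mul_assoc, ← rpow_add hc]; norm_num
    _ ≤ _ := by gcongr

end Elementary

noncomputable def expPhase (u : ℝ → ℝ) (μ y : ℝ) : ℂ :=
  Complex.exp ((μ * u y : ℝ) * Complex.I)

section expPhase

variable {u u' u'' : ℝ → ℝ} {a b μ ρ : ℝ}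

@[simp]
theorem norm_expPhase (u : ℝ → ℝ) (μ y : ℝ) : ‖expPhase u μ y‖ = 1 :=
  Complex.norm_exp_ofReal_mul_I _

theorem continuous_expPhase (hu : Continuous u) (μ : ℝ) : Continuous (expPhase u μ) := by
  unfold expPhase; fun_prop

theorem hasDerivAt_expPhase {y : ℝ} (hu : HasDerivAt u (u' y) y) (μ : ℝ) :
    HasDerivAt (expPhase u μ) (expPhase u μ y * ((μ * u' y : ℝ) * Complex.I)) y :=
  ((hu.const_mul μ).ofReal_comp.mul_const Complex.I).cexp

theorem expPhase_neg (u : ℝ → ℝ) (μ : ℝ) : expPhase (fun y => -u y) (-μ) = expPhase u μ := by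
  ext y; simp [expPhase]

theorem norm_integral_expPhase_le_sub (u : ℝ → ℝ) (μ : ℝ) (hab : a ≤ b) :
    ‖∫ y in a..b, expPhase u μ y‖ ≤ b - a := by
  simpa [abs_of_nonneg (sub_nonneg.2 hab)] using
    norm_integral_le_of_norm_le_const (a := a) (b := b) (C := 1) fun y _ =>
      (norm_expPhase u μ y).le

theorem integral_expPhase_eq_add_integral (hu' : ∀ y, HasDerivAt u (u' y) y)
    (hu'' : ∀ y, HasDerivAt u' (u'' y) y) (hcu'' : Continuous u'') (hab : a ≤ b)
    (hne : ∀ y ∈ Icc a b, μ * u' y ≠ 0) :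
    ∫ y in a..b, expPhase u μ y
      = expPhase u μ b / ((μ * u' b : ℝ) * Complex.I)
        - expPhase u μ a / ((μ * u' a : ℝ) * Complex.I)
        + ∫ y in a..b, expPhase u μ y * ((μ * u'' y : ℝ) * Complex.I)
            / ((μ * u' y : ℝ) * Complex.I) ^ 2 := by
  have hcu : Continuous u := continuous_of_forall_hasDerivAt hu'
  have hcu' : Continuous u' := continuous_of_forall_hasDerivAt hu''
  set D : ℝ → ℂ := fun y => (μ * u' y : ℝ) * Complex.I
  set D' : ℝ → ℂ := fun y => (μ * u'' y : ℝ) * Complex.I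
  have hD0 : ∀ y ∈ uIcc a b, D y ≠ 0 := fun y hy =>
    mul_ne_zero (Complex.ofReal_ne_zero.2 (hne y (uIcc_of_le hab ▸ hy))) Complex.I_ne_zero
  have hD : ∀ y ∈ uIcc a b, HasDerivAt D⁻¹ (-D' y / D y ^ 2) y := fun y hy =>
    (((hu'' y).const_mul μ).ofReal_comp.mul_const Complex.I).inv (hD0 y hy)
  have hparts := integral_mul_deriv_eq_deriv_mul hD (fun y _ => hasDerivAt_expPhase (hu' y) μ)
    (ContinuousOn.intervalIntegrable <| ContinuousOn.div (by fun_prop) (by fun_prop)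
      fun y hy => pow_ne_zero 2 (hD0 y hy))
    (Continuous.intervalIntegrable (by have := continuous_expPhase hcu μ; fun_prop) a b)
  have hcancel : ∀ y ∈ uIcc a b, D⁻¹ y * (expPhase u μ y * D y) = expPhase u μ y := fun y hy => by
    rw [Pi.inv_apply, mul_comm (expPhase u μ y), inv_mul_cancel_left₀ (hD0 y hy)]
  rw [integral_congr hcancel] at hparts
  rw [hparts, sub_eq_add_neg _ (∫ _ in _.._, _), ← intervalIntegral.integral_neg]
  simp only [Pi.inv_apply, div_eq_inv_mul, D, D']
  congr 2
  funext y
  ring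

theorem norm_integral_expPhase_le_of_le_abs_deriv (hu' : ∀ y, HasDerivAt u (u' y) y)
    (hu'' : ∀ y, HasDerivAt u' (u'' y) y) (hcu'' : Continuous u'') (hab : a ≤ b) (hμ : μ ≠ 0)
    (hρ : 0 < ρ) (hlow : ∀ y ∈ Icc a b, ρ ≤ |u' y|) :
    ‖∫ y in a..b, expPhase u μ y‖ ≤ (2 / ρ + ∫ y in a..b, |u'' y| / u' y ^ 2) / |μ| := by
  have hne : ∀ y ∈ Icc a b, μ * u' y ≠ 0 := fun y hy =>
    mul_ne_zero hμ (abs_pos.1 (hρ.trans_le (hlow y hy)))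
  have hend : ∀ y ∈ Icc a b,
      ‖expPhase u μ y / ((μ * u' y : ℝ) * Complex.I)‖ ≤ 1 / ρ / |μ| := fun y hy => by
    rw [norm_div, norm_expPhase, norm_mul, Complex.norm_real, Complex.norm_I, mul_one,
      Real.norm_eq_abs, abs_mul, div_div, mul_comm ρ]
    gcongr
    exact hlow y hy
  have hrest : ‖∫ y in a..b, expPhase u μ y * ((μ * u'' y : ℝ) * Complex.I)
      / ((μ * u' y : ℝ) * Complex.I) ^ 2‖ ≤ (∫ y in a..b, |u'' y| / u' y ^ 2) / |μ| := calc
    _ ≤ ∫ y in a..b, ‖expPhase u μ y * ((μ * u'' y : ℝ) * Complex.I)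
          / ((μ * u' y : ℝ) * Complex.I) ^ 2‖ :=
      intervalIntegral.norm_integral_le_integral_norm hab
    _ = ∫ y in a..b, |u'' y| / u' y ^ 2 / |μ| := integral_congr fun y _ => by
      simp only [norm_div, norm_mul, norm_pow, norm_expPhase, Complex.norm_real, Complex.norm_I,
        Real.norm_eq_abs, mul_one, one_mul, mul_pow, sq_abs]
      field_simp
      rw [sq_abs, mul_comm]
    _ = _ := intervalIntegral.integral_div _ _
  rw [integral_expPhase_eq_add_integral hu' hu'' hcu'' hab hne]
  calc _ ≤ ‖expPhase u μ b / ((μ * u' b : ℝ) * Complex.I)‖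
        + ‖expPhase u μ a / ((μ * u' a : ℝ) * Complex.I)‖
        + ‖∫ y in a..b, expPhase u μ y * ((μ * u'' y : ℝ) * Complex.I)
            / ((μ * u' y : ℝ) * Complex.I) ^ 2‖ :=
        (norm_add_le _ _).trans (add_le_add (norm_sub_le _ _) le_rfl)
    _ ≤ 1 / ρ / |μ| + 1 / ρ / |μ| + (∫ y in a..b, |u'' y| / u' y ^ 2) / |μ| :=
        add_le_add (add_le_add (hend b (right_mem_Icc.2 hab)) (hend a (left_mem_Icc.2 hab))) hrest
    _ = _ := by ring

theorem norm_integral_expPhase_le_of_abs_deriv2_le (hu' : ∀ y, HasDerivAt u (u' y) y)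
    (hu'' : ∀ y, HasDerivAt u' (u'' y) y) (hcu'' : Continuous u'') {M : ℝ} (hab : a ≤ b)
    (hμ : μ ≠ 0) (hρ : 0 < ρ) (hlow : ∀ y ∈ Icc a b, ρ ≤ |u' y|)
    (hM : ∀ y ∈ Icc a b, |u'' y| ≤ M) :
    ‖∫ y in a..b, expPhase u μ y‖ ≤ (2 / ρ + M * (b - a) / ρ ^ 2) / |μ| := by
  have hcu' : Continuous u' := continuous_of_forall_hasDerivAt hu''
  refine (norm_integral_expPhase_le_of_le_abs_deriv hu' hu'' hcu'' hab hμ hρ hlow).trans ?_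
  gcongr
  calc ∫ y in a..b, |u'' y| / u' y ^ 2 ≤ ∫ _ in a..b, M / ρ ^ 2 :=
        integral_mono_on hab (intervalIntegrable_div_sq hcu''.abs hcu' hab fun y hy h =>
          hρ.not_ge (by simpa [h] using hlow y hy)) intervalIntegrable_const fun y hy =>
          div_le_div₀ ((abs_nonneg _).trans (hM y hy)) (hM y hy) (by positivity)
            (by simpa only [sq_abs] using pow_le_pow_left₀ hρ.le (hlow y hy) 2)
    _ = M * (b - a) / ρ ^ 2 := by simp; ring

theorem norm_integral_expPhase_le_of_deriv2_nonneg (hu' : ∀ y, HasDerivAt u (u' y) y)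
    (hu'' : ∀ y, HasDerivAt u' (u'' y) y) (hcu'' : Continuous u'') (hab : a ≤ b)
    (hμ : μ ≠ 0) (hρ : 0 < ρ) (hlow : ∀ y ∈ Icc a b, ρ ≤ |u' y|)
    (hmono : ∀ y ∈ Icc a b, 0 ≤ u'' y) :
    ‖∫ y in a..b, expPhase u μ y‖ ≤ 4 / ρ / |μ| := by
  have hcu' : Continuous u' := continuous_of_forall_hasDerivAt hu''
  have hne : ∀ y ∈ Icc a b, u' y ≠ 0 := fun y hy h => hρ.not_ge (by simpa [h] using hlow y hy)
  have hinv : ∀ y ∈ Icc a b, |(u' y)⁻¹| ≤ 1 / ρ := fun y hy => by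
    rw [abs_inv, one_div]; exact inv_anti₀ hρ (hlow y hy)
  have hftc : ∫ y in a..b, |u'' y| / u' y ^ 2 = (u' a)⁻¹ - (u' b)⁻¹ := by
    have hderiv : ∀ y ∈ uIcc a b, HasDerivAt (fun y => -(u' y)⁻¹) (u'' y / u' y ^ 2) y :=
      fun y hy => ((hu'' y).inv (hne y (uIcc_of_le hab ▸ hy))).neg.congr_deriv (by ring)
    rw [integral_congr fun y hy => by rw [abs_of_nonneg (hmono y (uIcc_of_le hab ▸ hy))],
      integral_eq_sub_of_hasDerivAt hderiv (intervalIntegrable_div_sq hcu'' hcu' hab hne)]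
    ring
  calc _ ≤ (2 / ρ + ((u' a)⁻¹ - (u' b)⁻¹)) / |μ| :=
        hftc ▸ norm_integral_expPhase_le_of_le_abs_deriv hu' hu'' hcu'' hab hμ hρ hlow
    _ ≤ (2 / ρ + (1 / ρ + 1 / ρ)) / |μ| := by
        gcongr
        linarith [le_abs_self ((u' a)⁻¹ - (u' b)⁻¹), abs_sub (u' a)⁻¹ (u' b)⁻¹,
          hinv a (left_mem_Icc.2 hab), hinv b (right_mem_Icc.2 hab)]
    _ = 4 / ρ / |μ| := by ring

theorem norm_integral_expPhase_le_add_of_deriv2_nonneg_right (hu' : ∀ y, HasDerivAt u (u' y) y)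
    (hu'' : ∀ y, HasDerivAt u' (u'' y) y) (hcu'' : Continuous u'') {c r : ℝ} (hcb : c ≤ b)
    (hr : 0 ≤ r) (hμ : μ ≠ 0) (hρ : 0 < ρ) (hmono : ∀ y ∈ Icc c b, 0 ≤ u'' y)
    (hlow : ∀ y ∈ Icc (c + r) b, ρ ≤ |u' y|) :
    ‖∫ y in c..b, expPhase u μ y‖ ≤ r + 4 / ρ / |μ| := by
  have hcu : Continuous u := continuous_of_forall_hasDerivAt hu'
  have hint (x y : ℝ) := (continuous_expPhase hcu μ).intervalIntegrable (μ := volume) x y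
  have hpos : 0 ≤ 4 / ρ / |μ| := by positivity
  rcases le_or_gt b (c + r) with h | h
  · linarith [norm_integral_expPhase_le_sub u μ hcb]
  rw [← integral_add_adjacent_intervals (hint c (c + r)) (hint (c + r) b)]
  refine (norm_add_le _ _).trans (add_le_add ?_ ?_)
  · simpa using norm_integral_expPhase_le_sub u μ (le_add_of_nonneg_right hr)
  · exact norm_integral_expPhase_le_of_deriv2_nonneg hu' hu'' hcu'' h.le hμ hρ hlow
      fun y hy => hmono y ⟨by linarith [hy.1], hy.2⟩

theorem norm_integral_expPhase_le_add_of_deriv2_nonneg_left (hu' : ∀ y, HasDerivAt u (u' y) y)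
    (hu'' : ∀ y, HasDerivAt u' (u'' y) y) (hcu'' : Continuous u'') {c r : ℝ} (hac : a ≤ c)
    (hr : 0 ≤ r) (hμ : μ ≠ 0) (hρ : 0 < ρ) (hmono : ∀ y ∈ Icc a c, 0 ≤ u'' y)
    (hlow : ∀ y ∈ Icc a (c - r), ρ ≤ |u' y|) :
    ‖∫ y in a..c, expPhase u μ y‖ ≤ r + 4 / ρ / |μ| := by
  have hreflect : ∫ y in a..c, expPhase u μ y = ∫ y in -c..-a, expPhase (fun y => u (-y)) μ y := by
    simpa [expPhase] using integral_comp_neg (a := a) (b := c) (expPhase (fun y => u (-y)) μ)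
  rw [hreflect]
  refine norm_integral_expPhase_le_add_of_deriv2_nonneg_right (u' := fun y => -u' (-y))
    (u'' := fun y => u'' (-y)) (fun y => ?_) (fun y => ?_) (hcu''.comp continuous_neg)
    (neg_le_neg hac) hr hμ hρ (fun y hy => hmono (-y) ⟨?_, ?_⟩) (fun y hy => ?_)
  · exact ((hu' (-y)).comp y (hasDerivAt_neg y)).congr_deriv (by ring)
  · exact ((hu'' (-y)).comp y (hasDerivAt_neg y)).neg.congr_deriv (by ring)
  · linarith [hy.2]
  · linarith [hy.1]
  · simpa using hlow (-y) ⟨by linarith [hy.2], by linarith [hy.1]⟩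

theorem norm_integral_expPhase_le_of_le_deriv2 (hu' : ∀ y, HasDerivAt u (u' y) y)
    (hu'' : ∀ y, HasDerivAt u' (u'' y) y) (hcu'' : Continuous u'') {δ : ℝ} (hab : a ≤ b)
    (hμ : μ ≠ 0) (hδ : 0 < δ) (hconv : ∀ y ∈ Icc a b, δ ≤ u'' y) :
    ‖∫ y in a..b, expPhase u μ y‖ ≤ (2 + 8 / δ) / √|μ| := by
  have hcu : Continuous u := continuous_of_forall_hasDerivAt hu'
  have hcu' : Continuous u' := continuous_of_forall_hasDerivAt hu''
  have hmono : ∀ y ∈ Icc a b, 0 ≤ u'' y := fun y hy => hδ.le.trans (hconv y hy)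
  have hgrowth : ∀ x ∈ Icc a b, ∀ y ∈ Icc a b, x ≤ y → δ * (y - x) ≤ u' y - u' x :=
    (convex_Icc a b).mul_sub_le_image_sub_of_le_deriv hcu'.continuousOn
      (fun y _ => (hu'' y).differentiableAt.differentiableWithinAt)
      fun y hy => (hu'' y).deriv ▸ hconv y (interior_subset hy)
  obtain ⟨c, hc, hcl, hcr⟩ := exists_mem_Icc_nonpos_left_nonneg_right hcu'.continuousOn hab
  -- `u'` grows at rate `≥ δ` and changes sign at `c`, so `|u'| ≥ δ r` outside the window
  -- of half-width `r = |μ|^(-1/2)` around `c`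
  set s := √|μ|
  have hs : 0 < s := sqrt_pos.2 (abs_pos.2 hμ)
  have hμs : |μ| = s ^ 2 := (sq_sqrt (abs_nonneg μ)).symm
  set r := s⁻¹
  have hr : 0 < r := inv_pos.2 hs
  have hleft : ‖∫ y in a..c, expPhase u μ y‖ ≤ r + 4 / (δ * r) / |μ| :=
    norm_integral_expPhase_le_add_of_deriv2_nonneg_left hu' hu'' hcu'' hc.1 hr.le hμ
      (by positivity) (fun y hy => hmono y ⟨hy.1, hy.2.trans hc.2⟩) fun y hy => by
        have hyc : y ∈ Icc a b := ⟨hy.1, by linarith [hy.2, hc.2]⟩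
        have := hgrowth y hyc c hc (by linarith [hy.2])
        have := hcl (by linarith [hy.1, hy.2])
        rw [le_abs]; right; nlinarith [hy.2]
  have hright : ‖∫ y in c..b, expPhase u μ y‖ ≤ r + 4 / (δ * r) / |μ| :=
    norm_integral_expPhase_le_add_of_deriv2_nonneg_right hu' hu'' hcu'' hc.2 hr.le hμ
      (by positivity) (fun y hy => hmono y ⟨hc.1.trans hy.1, hy.2⟩) fun y hy => by
        have hyc : y ∈ Icc a b := ⟨by linarith [hy.1, hc.1], hy.2⟩
        have := hgrowth c hc y hyc (by linarith [hy.1])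
        have := hcr (by linarith [hy.1, hy.2])
        rw [le_abs]; left; nlinarith [hy.1]
  have hint (x y : ℝ) := (continuous_expPhase hcu μ).intervalIntegrable (μ := volume) x y
  rw [← integral_add_adjacent_intervals (hint a c) (hint c b)]
  calc _ ≤ r + 4 / (δ * r) / |μ| + (r + 4 / (δ * r) / |μ|) :=
        (norm_add_le _ _).trans (add_le_add hleft hright)
    _ = (2 + 8 / δ) / s := by
        rw [hμs]
        simp only [r]
        field_simp
        ring

theorem norm_integral_expPhase_le_of_deriv2_le_neg (hu' : ∀ y, HasDerivAt u (u' y) y)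
    (hu'' : ∀ y, HasDerivAt u' (u'' y) y) (hcu'' : Continuous u'') {δ : ℝ} (hab : a ≤ b)
    (hμ : μ ≠ 0) (hδ : 0 < δ) (hconc : ∀ y ∈ Icc a b, u'' y ≤ -δ) :
    ‖∫ y in a..b, expPhase u μ y‖ ≤ (2 + 8 / δ) / √|μ| := by
  rw [← expPhase_neg, ← abs_neg μ]
  exact norm_integral_expPhase_le_of_le_deriv2 (fun y => (hu' y).neg) (fun y => (hu'' y).neg)
    hcu''.neg hab (neg_ne_zero.2 hμ) hδ fun y hy => le_neg_of_le_neg (hconc y hy)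

theorem norm_integral_expPhase_le_of_abs_sub_le (hu' : ∀ y, HasDerivAt u (u' y) y)
    (hu'' : ∀ y, HasDerivAt u' (u'' y) y) (hcu'' : Continuous u'') {ε M : ℝ} (hab : a ≤ b)
    (hμ : 1 ≤ |μ|) (hε : 0 < ε) (hM : ∀ y ∈ Icc a b, |u'' y| ≤ M)
    (hnd : ε ≤ max |u' a| |u'' a|)
    (hclose : ∀ y ∈ Icc a b, |u' y - u' a| ≤ ε / 2 ∧ |u'' y - u'' a| ≤ ε / 2) :
    ‖∫ y in a..b, expPhase u μ y‖
      ≤ (4 / ε + 4 * M * (b - a) / ε ^ 2 + (2 + 16 / ε)) / √|μ| := by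
  have hμ0 : μ ≠ 0 := abs_pos.1 (one_pos.trans_le hμ)
  have hs : 0 < √|μ| := sqrt_pos.2 (abs_pos.2 hμ0)
  have hsμ : √|μ| ≤ |μ| := (sqrt_le_iff).2 ⟨abs_nonneg μ, by nlinarith⟩
  have hM0 : 0 ≤ M := (abs_nonneg _).trans (hM a (left_mem_Icc.2 hab))
  have h4M : 0 ≤ 4 * M * (b - a) / ε ^ 2 := div_nonneg (by nlinarith) (by positivity)
  have hK₁ : 4 / ε + 4 * M * (b - a) / ε ^ 2
      ≤ 4 / ε + 4 * M * (b - a) / ε ^ 2 + (2 + 16 / ε) := le_add_of_nonneg_right (by positivity)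
  have hK₂ : 2 + 8 / (ε / 2) ≤ 4 / ε + 4 * M * (b - a) / ε ^ 2 + (2 + 16 / ε) := by
    have : 0 ≤ 4 / ε := by positivity
    linarith [show 8 / (ε / 2) = 16 / ε by field_simp; ring]
  rcases le_max_iff.1 hnd with h | h
  · have hlow : ∀ y ∈ Icc a b, ε / 2 ≤ |u' y| := fun y hy => by
      linarith [abs_sub_abs_le_abs_sub (u' a) (u' y), abs_sub_comm (u' a) (u' y), (hclose y hy).1]
    calc _ ≤ (2 / (ε / 2) + M * (b - a) / (ε / 2) ^ 2) / |μ| :=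
          norm_integral_expPhase_le_of_abs_deriv2_le hu' hu'' hcu'' hab hμ0 (half_pos hε) hlow hM
      _ = (4 / ε + 4 * M * (b - a) / ε ^ 2) / |μ| := by field_simp; ring
      _ ≤ (4 / ε + 4 * M * (b - a) / ε ^ 2) / √|μ| := by gcongr
      _ ≤ _ := div_le_div_of_nonneg_right hK₁ hs.le
  rcases le_abs'.1 h with h | h
  · have hconc : ∀ y ∈ Icc a b, u'' y ≤ -(ε / 2) := fun y hy => by
      linarith [le_abs_self (u'' y - u'' a), (hclose y hy).2]
    exact (norm_integral_expPhase_le_of_deriv2_le_neg hu' hu'' hcu'' hab hμ0 (half_pos hε)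
      hconc).trans (div_le_div_of_nonneg_right hK₂ hs.le)
  · have hconv : ∀ y ∈ Icc a b, ε / 2 ≤ u'' y := fun y hy => by
      linarith [neg_abs_le (u'' y - u'' a), (hclose y hy).2]
    exact (norm_integral_expPhase_le_of_le_deriv2 hu' hu'' hcu'' hab hμ0 (half_pos hε)
      hconv).trans (div_le_div_of_nonneg_right hK₂ hs.le)

theorem exists_norm_integral_expPhase_le (hu' : ∀ y, HasDerivAt u (u' y) y)
    (hu'' : ∀ y, HasDerivAt u' (u'' y) y) (hcu'' : Continuous u'') (hab : a ≤ b)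
    (hnd : ∀ y ∈ Icc a b, u' y = 0 → u'' y ≠ 0) :
    ∃ K, 0 ≤ K ∧ ∀ μ, 1 ≤ |μ| → ∀ z ∈ Icc a b, ‖∫ y in a..z, expPhase u μ y‖ ≤ K / √|μ| := by
  have hcu : Continuous u := continuous_of_forall_hasDerivAt hu'
  have hcu' : Continuous u' := continuous_of_forall_hasDerivAt hu''
  obtain ⟨ε, hε, hεle⟩ := isCompact_Icc.exists_forall_le' (hcu'.abs.max hcu''.abs).continuousOn
    (a := 0) fun y hy => by
      by_cases h : u' y = 0
      · exact lt_max_of_lt_right (abs_pos.2 (hnd y hy h))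
      · exact lt_max_of_lt_left (abs_pos.2 h)
  obtain ⟨M, hM⟩ := isCompact_Icc.exists_bound_of_continuousOn (s := Icc a b)
    hcu''.continuousOn
  have hM0 : 0 ≤ M := (norm_nonneg _).trans (hM a (left_mem_Icc.2 hab))
  obtain ⟨ℓ₁, hℓ₁, h₁⟩ := Metric.uniformContinuousOn_iff_le.1
    (isCompact_Icc.uniformContinuousOn_of_continuous hcu'.continuousOn) (ε / 2) (half_pos hε)
  obtain ⟨ℓ₂, hℓ₂, h₂⟩ := Metric.uniformContinuousOn_iff_le.1
    (isCompact_Icc.uniformContinuousOn_of_continuous hcu''.continuousOn) (ε / 2) (half_pos hε)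
  set ℓ := min ℓ₁ ℓ₂
  set N := ⌈(b - a) / ℓ⌉₊
  have hN : b - a ≤ N * ℓ := (div_le_iff₀ (lt_min hℓ₁ hℓ₂)).1 (Nat.le_ceil _)
  refine ⟨N * (4 / ε + 4 * M * ℓ / ε ^ 2 + (2 + 16 / ε)), by positivity, fun μ hμ z hz => ?_⟩
  have hshort : ∀ x ∈ Icc a b, ∀ y ∈ Icc a b, x ≤ y → y - x ≤ ℓ →
      ‖∫ s in x..y, expPhase u μ s‖ ≤ (4 / ε + 4 * M * ℓ / ε ^ 2 + (2 + 16 / ε)) / √|μ| := by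
    intro x hx y hy hxy hlen
    have hsub : Icc x y ⊆ Icc a b := Icc_subset_Icc hx.1 hy.2
    have hdist : ∀ s ∈ Icc x y, dist s x ≤ min ℓ₁ ℓ₂ := fun s hs => by
      rw [Real.dist_eq, abs_of_nonneg (by linarith [hs.1])]; linarith [hs.2]
    refine (norm_integral_expPhase_le_of_abs_sub_le hu' hu'' hcu'' hxy hμ hε
      (fun s hs => by simpa using hM s (hsub hs)) (hεle x hx) fun s hs => ⟨?_, ?_⟩).trans ?_
    · simpa [Real.dist_eq] using h₁ s (hsub hs) x hx ((hdist s hs).trans (min_le_left _ _))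
    · simpa [Real.dist_eq] using h₂ s (hsub hs) x hx ((hdist s hs).trans (min_le_right _ _))
    · gcongr
  have := norm_integral_le_mul_of_norm_integral_le
    (fun x y => (continuous_expPhase hcu μ).intervalIntegrable x y) hshort N a
    (left_mem_Icc.2 hab) z hz hz.1 (by linarith [hz.2])
  rwa [mul_div_assoc]

theorem exists_norm_integral_expPhase_le_rpow (hu' : ∀ y, HasDerivAt u (u' y) y)
    (hu'' : ∀ y, HasDerivAt u' (u'' y) y) (hcu'' : Continuous u'') (hab : a < b)
    (hnd : ∀ y ∈ Icc a b, u' y = 0 → u'' y ≠ 0) :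
    ∃ K > 0, ∀ μ, ∀ z ∈ Icc a b,
      ‖∫ y in a..z, expPhase u μ y‖ ≤ K * (1 + μ ^ 2) ^ (-(1 / 4 : ℝ)) := by
  obtain ⟨K, hK, hdecay⟩ := exists_norm_integral_expPhase_le hu' hu'' hcu'' hab.le hnd
  refine ⟨2 * (K + (b - a)), by positivity, fun μ z hz => ?_⟩
  rcases le_total 1 |μ| with hμ | hμ
  · have hs : 0 < √|μ| := sqrt_pos.2 (one_pos.trans_le hμ)
    have hquarter : (2 * √|μ|)⁻¹ ≤ (1 + μ ^ 2) ^ (-(1 / 4 : ℝ)) :=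
      inv_le_rpow_neg_quarter (by positivity) (by positivity) <| by
        rw [mul_pow, show √|μ| ^ 4 = (√|μ| ^ 2) ^ 2 by ring, sq_sqrt (abs_nonneg μ), sq_abs]
        nlinarith [sq_abs μ]
    calc _ ≤ K / √|μ| := hdecay μ hμ z hz
      _ = 2 * K * (2 * √|μ|)⁻¹ := by field_simp
      _ ≤ 2 * (K + (b - a)) * (1 + μ ^ 2) ^ (-(1 / 4 : ℝ)) := by gcongr; linarith
  · have hquarter : 2⁻¹ ≤ (1 + μ ^ 2) ^ (-(1 / 4 : ℝ)) :=
      inv_le_rpow_neg_quarter (by positivity) two_pos (by nlinarith [sq_abs μ, abs_nonneg μ])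
    calc _ ≤ z - a := norm_integral_expPhase_le_sub u μ hz.1
      _ ≤ 2 * (b - a) * 2⁻¹ := by linarith [hz.2]
      _ ≤ 2 * (K + (b - a)) * (1 + μ ^ 2) ^ (-(1 / 4 : ℝ)) := by gcongr; linarith

end expPhase

noncomputable def h1Norm (a b : ℝ) (f f' : ℝ → ℂ) : ℝ :=
  √(∫ y in a..b, ‖f y‖ ^ 2 + ‖f' y‖ ^ 2)

section Sobolev

variable {a b : ℝ}

theorem integral_mul_le_sqrt_mul_sqrt {f g : ℝ → ℝ} (hf : Continuous f) (hg : Continuous g)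
    (hab : a ≤ b) :
    ∫ y in a..b, f y * g y ≤ √(∫ y in a..b, f y ^ 2) * √(∫ y in a..b, g y ^ 2) := by
  set A := ∫ y in a..b, f y ^ 2
  set I := ∫ y in a..b, f y * g y
  set B := ∫ y in a..b, g y ^ 2
  have hquad : ∀ s : ℝ, 0 ≤ A * (s * s) + (-2 * I) * s + B := fun s => by
    have hexpand : ∫ y in a..b, (s * f y - g y) ^ 2 = A * (s * s) + (-2 * I) * s + B := by
      have (y : ℝ) : (s * f y - g y) ^ 2
          = s * s * f y ^ 2 - 2 * s * (f y * g y) + g y ^ 2 := by ring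
      simp_rw [this]
      rw [intervalIntegral.integral_add, intervalIntegral.integral_sub,
        intervalIntegral.integral_const_mul, intervalIntegral.integral_const_mul]
      · ring
      all_goals exact Continuous.intervalIntegrable (by fun_prop) _ _
    rw [← hexpand]
    exact integral_nonneg hab fun y _ => sq_nonneg _
  have hdisc := discrim_le_zero hquad
  rw [discrim] at hdisc
  have hA : 0 ≤ A := integral_nonneg hab fun y _ => sq_nonneg _
  rw [← Real.sqrt_mul hA]
  exact (le_abs_self I).trans (Real.abs_le_sqrt (by nlinarith))

theorem integral_norm_le_sqrt_mul {f : ℝ → ℂ} (hf : Continuous f) (hab : a ≤ b) :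
    ∫ y in a..b, ‖f y‖ ≤ √(b - a) * √(∫ y in a..b, ‖f y‖ ^ 2) := by
  simpa using integral_mul_le_sqrt_mul_sqrt (continuous_const (y := 1)) hf.norm hab

theorem norm_le_integral_norm_div_add_integral_norm_deriv {f f' : ℝ → ℂ}
    (hf : ∀ y, HasDerivAt f (f' y) y) (hf' : Continuous f') (hab : a < b) {y : ℝ}
    (hy : y ∈ Icc a b) :
    ‖f y‖ ≤ (∫ s in a..b, ‖f s‖) / (b - a) + ∫ s in a..b, ‖f' s‖ := by
  have hcf : Continuous f := continuous_of_forall_hasDerivAt hf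
  obtain ⟨x, hx, hmin⟩ := isCompact_Icc.exists_isMinOn (nonempty_Icc.2 hab.le)
    hcf.norm.continuousOn
  have havg : ‖f x‖ ≤ (∫ s in a..b, ‖f s‖) / (b - a) := by
    rw [le_div_iff₀' (sub_pos.2 hab)]
    simpa using integral_mono_on hab.le (intervalIntegrable_const (μ := volume))
      (hcf.norm.intervalIntegrable a b) fun s hs => hmin hs
  have hvar : ‖f y - f x‖ ≤ ∫ s in a..b, ‖f' s‖ := calc
    ‖f y - f x‖ = ‖∫ s in x..y, f' s‖ := by
      rw [integral_eq_sub_of_hasDerivAt (fun s _ => hf s) (hf'.intervalIntegrable x y)]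
    _ ≤ ∫ s in Ι x y, ‖f' s‖ := norm_integral_le_integral_norm_uIoc
    _ ≤ ∫ s in Ι a b, ‖f' s‖ :=
      setIntegral_mono_set (hf'.norm.integrableOn_uIcc.mono_set uIoc_subset_uIcc)
        (Eventually.of_forall fun s => norm_nonneg _) <| Eventually.of_forall <|
          uIoc_subset_uIoc_of_uIcc_subset_uIcc <|
            uIcc_subset_uIcc (Icc_subset_uIcc hx) (Icc_subset_uIcc hy)
    _ = ∫ s in a..b, ‖f' s‖ := by rw [integral_of_le hab.le, uIoc_of_le hab.le]
  calc ‖f y‖ ≤ ‖f x‖ + ‖f y - f x‖ := norm_le_insert' _ _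
    _ ≤ _ := add_le_add havg hvar

theorem sqrt_integral_norm_sq_le_h1Norm {f f' : ℝ → ℂ} (hf : Continuous f)
    (hf' : Continuous f') (hab : a ≤ b) : √(∫ y in a..b, ‖f y‖ ^ 2) ≤ h1Norm a b f f' :=
  sqrt_le_sqrt <| integral_mono_on hab ((hf.norm.pow 2).intervalIntegrable a b)
    ((hf.norm.pow 2 |>.add (hf'.norm.pow 2)).intervalIntegrable a b)
    fun _ _ => le_add_of_nonneg_right (sq_nonneg _)

theorem sqrt_integral_norm_deriv_sq_le_h1Norm {f f' : ℝ → ℂ} (hf : Continuous f)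
    (hf' : Continuous f') (hab : a ≤ b) : √(∫ y in a..b, ‖f' y‖ ^ 2) ≤ h1Norm a b f f' :=
  sqrt_le_sqrt <| integral_mono_on hab ((hf'.norm.pow 2).intervalIntegrable a b)
    ((hf.norm.pow 2 |>.add (hf'.norm.pow 2)).intervalIntegrable a b)
    fun _ _ => le_add_of_nonneg_left (sq_nonneg _)

theorem norm_le_mul_h1Norm {f f' : ℝ → ℂ} (hf : ∀ y, HasDerivAt f (f' y) y)
    (hf' : Continuous f') (hab : a < b) {y : ℝ} (hy : y ∈ Icc a b) :
    ‖f y‖ ≤ ((√(b - a))⁻¹ + √(b - a)) * h1Norm a b f f' := by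
  have hcf : Continuous f := continuous_of_forall_hasDerivAt hf
  have hL : 0 < √(b - a) := sqrt_pos.2 (sub_pos.2 hab)
  have hf1 := (integral_norm_le_sqrt_mul hcf hab.le).trans <|
    mul_le_mul_of_nonneg_left (sqrt_integral_norm_sq_le_h1Norm hcf hf' hab.le) hL.le
  have hf'1 := (integral_norm_le_sqrt_mul hf' hab.le).trans <|
    mul_le_mul_of_nonneg_left (sqrt_integral_norm_deriv_sq_le_h1Norm hcf hf' hab.le) hL.le
  calc ‖f y‖ ≤ (∫ s in a..b, ‖f s‖) / (b - a) + ∫ s in a..b, ‖f' s‖ :=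
        norm_le_integral_norm_div_add_integral_norm_deriv hf hf' hab hy
    _ ≤ √(b - a) * h1Norm a b f f' / √(b - a) ^ 2 + √(b - a) * h1Norm a b f f' := by
        rw [sq_sqrt (sub_pos.2 hab).le]; gcongr
    _ = ((√(b - a))⁻¹ + √(b - a)) * h1Norm a b f f' := by field_simp

theorem norm_mul_add_integral_norm_deriv_mul_le {g g' φ φ' : ℝ → ℂ}
    (hg : ∀ y, HasDerivAt g (g' y) y) (hg' : Continuous g')
    (hφ : ∀ y, HasDerivAt φ (φ' y) y) (hφ' : Continuous φ') (hab : a < b) :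
    ‖g b * φ b‖ + ∫ y in a..b, ‖g' y * φ y + g y * φ' y‖
      ≤ (((√(b - a))⁻¹ + √(b - a)) ^ 2 + 2) * (h1Norm a b g g' * h1Norm a b φ φ') := by
  have hcg : Continuous g := continuous_of_forall_hasDerivAt hg
  have hcφ : Continuous φ := continuous_of_forall_hasDerivAt hφ
  have hb : b ∈ Icc a b := right_mem_Icc.2 hab.le
  have hNg : 0 ≤ h1Norm a b g g' := sqrt_nonneg _
  have hend : ‖g b * φ b‖
      ≤ ((√(b - a))⁻¹ + √(b - a)) ^ 2 * (h1Norm a b g g' * h1Norm a b φ φ') := by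
    rw [norm_mul]
    refine (mul_le_mul (norm_le_mul_h1Norm hg hg' hab hb) (norm_le_mul_h1Norm hφ hφ' hab hb)
      (norm_nonneg _) (by positivity)).trans_eq (by ring)
  have hprod : ∫ y in a..b, ‖g' y * φ y + g y * φ' y‖
      ≤ 2 * (h1Norm a b g g' * h1Norm a b φ φ') := calc
    _ ≤ ∫ y in a..b, (‖g' y‖ * ‖φ y‖ + ‖g y‖ * ‖φ' y‖) :=
      integral_mono_on hab.le (Continuous.intervalIntegrable (by fun_prop) _ _)
        (Continuous.intervalIntegrable (by fun_prop) _ _) fun y _ => by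
          simpa only [norm_mul] using norm_add_le (g' y * φ y) (g y * φ' y)
    _ = (∫ y in a..b, ‖g' y‖ * ‖φ y‖) + ∫ y in a..b, ‖g y‖ * ‖φ' y‖ :=
      intervalIntegral.integral_add (Continuous.intervalIntegrable (by fun_prop) _ _)
        (Continuous.intervalIntegrable (by fun_prop) _ _)
    _ ≤ h1Norm a b g g' * h1Norm a b φ φ' + h1Norm a b g g' * h1Norm a b φ φ' := by
      gcongr
      · refine (integral_mul_le_sqrt_mul_sqrt hg'.norm hcφ.norm hab.le).trans ?_
        exact mul_le_mul (sqrt_integral_norm_deriv_sq_le_h1Norm hcg hg' hab.le)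
          (sqrt_integral_norm_sq_le_h1Norm hcφ hφ' hab.le) (sqrt_nonneg _) hNg
      · refine (integral_mul_le_sqrt_mul_sqrt hcg.norm hφ'.norm hab.le).trans ?_
        exact mul_le_mul (sqrt_integral_norm_sq_le_h1Norm hcg hg' hab.le)
          (sqrt_integral_norm_deriv_sq_le_h1Norm hcφ hφ' hab.le) (sqrt_nonneg _) hNg
    _ = 2 * (h1Norm a b g g' * h1Norm a b φ φ') := by ring
  linarith

theorem norm_integral_mul_le_of_norm_primitive_le {e h h' : ℝ → ℂ} {S : ℝ}
    (he : Continuous e) (hh : ∀ y, HasDerivAt h (h' y) y) (hh' : Continuous h') (hab : a ≤ b)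
    (hS : ∀ z ∈ Icc a b, ‖∫ y in a..z, e y‖ ≤ S) :
    ‖∫ y in a..b, e y * h y‖ ≤ S * (‖h b‖ + ∫ y in a..b, ‖h' y‖) := by
  set P : ℝ → ℂ := fun z => ∫ y in a..z, e y
  have hP (z : ℝ) : HasDerivAt P (e z) z := (he.integral_hasStrictDerivAt a z).hasDerivAt
  have hcP : Continuous P := continuous_of_forall_hasDerivAt hP
  have hparts : ∫ y in a..b, e y * h y = h b * P b - ∫ y in a..b, h' y * P y := by
    simp_rw [mul_comm (e _)]
    rw [integral_mul_deriv_eq_deriv_mul (fun y _ => hh y) (fun y _ => hP y)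
      (hh'.intervalIntegrable a b) (he.intervalIntegrable a b)]
    simp [P]
  rw [hparts]
  calc ‖h b * P b - ∫ y in a..b, h' y * P y‖
      ≤ ‖h b‖ * S + ∫ y in a..b, ‖h' y‖ * S := by
        refine (norm_sub_le _ _).trans (add_le_add ?_ ?_)
        · rw [norm_mul]
          exact mul_le_mul_of_nonneg_left (hS b (right_mem_Icc.2 hab)) (norm_nonneg _)
        · refine (intervalIntegral.norm_integral_le_integral_norm hab).trans (integral_mono_on hab
            ((hh'.mul hcP).norm.intervalIntegrable a b)
            ((hh'.norm.mul continuous_const).intervalIntegrable a b) fun y hy => ?_)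
          rw [norm_mul]; exact mul_le_mul_of_nonneg_left (hS y hy) (norm_nonneg _)
    _ = S * (‖h b‖ + ∫ y in a..b, ‖h' y‖) := by
        rw [intervalIntegral.integral_mul_const]; ring

end Sobolev

theorem stmt_2_general
    (w w' w'' : ℝ → ℝ)
    (hw : ContDiff ℝ 3 w)
    (hw' : ∀ y, HasDerivAt w (w' y) y)
    (hw'' : ∀ y, HasDerivAt w' (w'' y) y)
    (hnd : ∀ y, w' y = 0 → w'' y ≠ 0)
    (α : ℝ) (hα : α ≠ 0) :
    ∃ C > 0, ∀ (g g' φ φ' : ℝ → ℂ),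
      Continuous g → Continuous g' → Continuous φ → Continuous φ' →
      (∀ y, HasDerivAt g (g' y) y) → (∀ y, HasDerivAt φ (φ' y) y) →
      Function.Periodic g (2 * Real.pi) → Function.Periodic φ (2 * Real.pi) →
      Real.sqrt (∫ y in (0:ℝ)..(2 * Real.pi), ‖φ y‖ ^ 2 + ‖φ' y‖ ^ 2) ≤ 1 →
      ∀ t : ℝ, 0 ≤ t →
        ‖∫ y in (0:ℝ)..(2 * Real.pi),
            Complex.exp (-Complex.I * (α : ℂ) * (w y : ℂ) * (t : ℂ)) * g y * φ y‖
          ≤ C * (1 + t ^ 2) ^ (-(1/4 : ℝ)) *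
              Real.sqrt (∫ y in (0:ℝ)..(2 * Real.pi), ‖g y‖ ^ 2 + ‖g' y‖ ^ 2) := by
  have hcw'' : Continuous w'' := by
    have h := hw.continuous_iteratedDeriv 2 (by norm_num)
    rwa [iteratedDeriv_succ, iteratedDeriv_one, funext fun y => (hw' y).deriv,
      funext fun y => (hw'' y).deriv] at h
  obtain ⟨K, hK, hdecay⟩ :=
    exists_norm_integral_expPhase_le_rpow hw' hw'' hcw'' two_pi_pos fun y _ => hnd y
  set A := ((√(2 * π))⁻¹ + √(2 * π)) ^ 2 + 2
  refine ⟨K * (1 + α⁻¹ ^ 2) ^ (1 / 4 : ℝ) * A, by positivity, ?_⟩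
  intro g g' φ φ' hcg hcg' hcφ hcφ' hg hφ _ _ hφ1 t _
  have hamplitude : ‖g (2 * π) * φ (2 * π)‖ + ∫ y in 0..2 * π, ‖g' y * φ y + g y * φ' y‖
      ≤ A * h1Norm 0 (2 * π) g g' := by
    have h := norm_mul_add_integral_norm_deriv_mul_le hg hcg' hφ hcφ' two_pi_pos
    rw [sub_zero] at h
    exact h.trans <| mul_le_mul_of_nonneg_left (mul_le_of_le_one_right (sqrt_nonneg _) hφ1)
      (by positivity)
  have hphase : ∀ y, Complex.exp (-Complex.I * α * w y * t) * g y * φ y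
      = expPhase w (-(α * t)) y * (g y * φ y) := fun y => by
    simp only [expPhase]; push_cast; ring_nf
  calc _ = ‖∫ y in 0..2 * π, expPhase w (-(α * t)) y * (g y * φ y)‖ := by simp_rw [hphase]
    _ ≤ K * (1 + (α * t) ^ 2) ^ (-(1 / 4 : ℝ))
          * (‖g (2 * π) * φ (2 * π)‖ + ∫ y in 0..2 * π, ‖g' y * φ y + g y * φ' y‖) := by
        simpa only [neg_sq] using norm_integral_mul_le_of_norm_primitive_le
          (h := fun y => g y * φ y) (continuous_expPhase hw.continuous _)
          (fun y => (hg y).mul (hφ y)) (by fun_prop) two_pi_pos.le (hdecay (-(α * t)))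
    _ ≤ K * ((1 + α⁻¹ ^ 2) ^ (1 / 4 : ℝ) * (1 + t ^ 2) ^ (-(1 / 4 : ℝ)))
          * (A * h1Norm 0 (2 * π) g g') := by
        have : 0 ≤ ‖g (2 * π) * φ (2 * π)‖ + ∫ y in 0..2 * π, ‖g' y * φ y + g y * φ' y‖ :=
          add_nonneg (norm_nonneg _) (integral_nonneg two_pi_pos.le fun _ _ => norm_nonneg _)
        gcongr
        exact one_add_mul_sq_rpow_neg_quarter_le hα t
    _ = K * (1 + α⁻¹ ^ 2) ^ (1 / 4 : ℝ) * A * (1 + t ^ 2) ^ (-(1 / 4 : ℝ))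
          * h1Norm 0 (2 * π) g g' := by ring

/-- Stationary-phase decay in `H⁻¹`: if `w` is a `C³` periodic phase with only
nondegenerate critical points, then for every nonzero `α` there is `C` (independent of `t`
and `g`) such that, in the dual (H⁻¹) formulation, for every `g ∈ H¹` and every test
function `φ` with `‖φ‖_{H¹} ≤ 1`,
`|∫ e^{-iαw t} g φ| ≤ C ⟨t⟩^{-1/2} ‖g‖_{H¹}`. -/
theorem stmt_2
    (w w' w'' : ℝ → ℝ)
    (hw : ContDiff ℝ 3 w)
    (hw' : ∀ y, HasDerivAt w (w' y) y)
    (hw'' : ∀ y, HasDerivAt w' (w'' y) y)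
    (hwp : Function.Periodic w (2 * Real.pi))
    (hnd : ∀ y, w' y = 0 → w'' y ≠ 0)
    (α : ℝ) (hα : α ≠ 0) :
    ∃ C > 0, ∀ (g g' φ φ' : ℝ → ℂ),
      Continuous g → Continuous g' → Continuous φ → Continuous φ' →
      (∀ y, HasDerivAt g (g' y) y) → (∀ y, HasDerivAt φ (φ' y) y) →
      Function.Periodic g (2 * Real.pi) → Function.Periodic φ (2 * Real.pi) →
      Real.sqrt (∫ y in (0:ℝ)..(2 * Real.pi), ‖φ y‖ ^ 2 + ‖φ' y‖ ^ 2) ≤ 1 →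
      ∀ t : ℝ, 0 ≤ t →
        ‖∫ y in (0:ℝ)..(2 * Real.pi),
            Complex.exp (-Complex.I * (α : ℂ) * (w y : ℂ) * (t : ℂ)) * g y * φ y‖
          ≤ C * (1 + t ^ 2) ^ (-(1/4 : ℝ)) *
              Real.sqrt (∫ y in (0:ℝ)..(2 * Real.pi), ‖g y‖ ^ 2 + ‖g' y‖ ^ 2) :=
  stmt_2_general w w' w'' hw hw' hw'' hnd α hα
end

section
/- Let H : [y₀, y₂] → ℂ be continuous with H(y) ≠ 0 for all y, and suppose |H(y'')| ≤ |H(y')| whenever y₀ ≤ y'' ≤ y' (monotone modulus). Fix y_r ∈ [y₀,y₂] and A > 0 and define (S₁ f)(y) := (1/H(y)) ∫_{y_r}^y H(y'') f(y'') dy''. Then in the weighted norm ‖f‖_X := sup_y |f(y)|/cosh(A(y−y_r)) one has ‖S₁ f‖_X ≤ (C/A)‖f‖_X with C independent of A. Consequently the composed operator S = S₀ ∘ S₁ satisfies ‖S f‖_X ≤ (C/A²)‖f‖_X. -/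
/-!
Since `|H|` is largest at the endpoint `y` of `[y_r, y]`, the factor `H(y)⁻¹` absorbs the weight `H`
inside the integral, so `S₁` is controlled by `f ↦ ∫_{y_r}^y f`. Against the weight
`cosh (A (y - y_r))` that integral costs a factor `1/A`, because
`∫_{y_r}^y cosh (A (t - y_r)) dt = sinh (A (y - y_r)) / A` and `|sinh| ≤ cosh`.
Applying the same bound once more to `S₀` gives `1/A²` for `S₀ ∘ S₁`; the constant is `C = 1`.
-/

open MeasureTheory

namespace Real

theorem abs_sinh_le_cosh (x : ℝ) : |sinh x| ≤ cosh x := by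
  rw [abs_sinh, ← cosh_abs]
  exact (sinh_lt_cosh _).le

theorem integral_cosh_mul_sub {A : ℝ} (hA : A ≠ 0) (a b : ℝ) :
    ∫ t in a..b, cosh (A * (t - a)) = sinh (A * (b - a)) / A := by
  have hderiv : ∀ t ∈ Set.uIcc a b,
      HasDerivAt (fun t => sinh (A * (t - a)) / A) (cosh (A * (t - a))) t := by
    intro t _
    have hlin : HasDerivAt (fun x => A * (x - a)) (A * 1) t :=
      ((hasDerivAt_id t).sub_const a).const_mul A
    simpa [mul_comm, mul_div_assoc, hA] using ((hasDerivAt_sinh _).comp t hlin).div_const A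
  have hcont : Continuous fun t => cosh (A * (t - a)) := by fun_prop
  rw [intervalIntegral.integral_eq_sub_of_hasDerivAt hderiv (hcont.intervalIntegrable a b)]
  simp

end Real

open Real

variable {E : Type*} [NormedAddCommGroup E] [NormedSpace ℝ E]

theorem norm_integral_le_of_norm_le_mul_cosh {g : ℝ → E} {a b A X : ℝ} (hA : 0 < A)
    (hX : 0 ≤ X) (hg : ∀ t ∈ Set.uIoc a b, ‖g t‖ ≤ X * cosh (A * (t - a))) :
    ‖∫ t in a..b, g t‖ ≤ X / A * cosh (A * (b - a)) := by
  have hcont : Continuous fun t => X * cosh (A * (t - a)) := by fun_prop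
  calc ‖∫ t in a..b, g t‖
      ≤ |∫ t in a..b, X * cosh (A * (t - a))| :=
        intervalIntegral.norm_integral_le_abs_of_norm_le
          ((ae_restrict_mem measurableSet_uIoc).mono hg) (hcont.intervalIntegrable a b)
    _ = X / A * |sinh (A * (b - a))| := by
        rw [intervalIntegral.integral_const_mul, integral_cosh_mul_sub hA.ne', abs_mul, abs_div,
          abs_of_pos hA, abs_of_nonneg hX]
        ring
    _ ≤ X / A * cosh (A * (b - a)) := by
        gcongr
        exact abs_sinh_le_cosh _

theorem norm_inv_mul_integral_mul_le_of_norm_le_mul_cosh {𝕜 : Type*} [RCLike 𝕜]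
    {H f : ℝ → 𝕜} {a y A X : ℝ} (hA : 0 < A) (hX : 0 ≤ X) (hHy : H y ≠ 0)
    (hH : ∀ t ∈ Set.uIcc a y, ‖H t‖ ≤ ‖H y‖)
    (hf : ∀ t ∈ Set.uIcc a y, ‖f t‖ ≤ X * cosh (A * (t - a))) :
    ‖(H y)⁻¹ * ∫ t in a..y, H t * f t‖ ≤ X / A * cosh (A * (y - a)) := by
  have hHy_pos : 0 < ‖H y‖ := norm_pos_iff.mpr hHy
  have hHf : ∀ t ∈ Set.uIoc a y, ‖H t * f t‖ ≤ ‖H y‖ * X * cosh (A * (t - a)) := by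
    intro t ht
    have ht' := Set.uIoc_subset_uIcc ht
    rw [norm_mul, mul_assoc]
    exact mul_le_mul (hH t ht') (hf t ht') (norm_nonneg _) hHy_pos.le
  calc ‖(H y)⁻¹ * ∫ t in a..y, H t * f t‖
      ≤ ‖H y‖⁻¹ * (‖H y‖ * X / A * cosh (A * (y - a))) := by
        rw [norm_mul, norm_inv]
        gcongr
        exact norm_integral_le_of_norm_le_mul_cosh hA (by positivity) hHf
    _ = X / A * cosh (A * (y - a)) := by
        field_simp

/-- Weighted estimate for the Sturmian integral operator
`S₁f(y) = H(y)⁻¹ ∫_{y_r}^y H f` under the monotone-modulus condition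
(`|H(y'')| ≤ |H(y)|` for `y''` between `y_r` and `y`): `‖S₁f‖_X ≤ (C/A)‖f‖_X`,
and for the composition `S = S₀ ∘ S₁`, `‖Sf‖_X ≤ (C/A²)‖f‖_X`. -/
theorem stmt_9 :
    ∃ C > 0, ∀ (y0 y2 yr A : ℝ) (H : ℝ → ℂ) (f : ℝ → ℂ) (X : ℝ),
      y0 ≤ yr → yr ≤ y2 → 0 < A → 0 ≤ X →
      Continuous H → Continuous f →
      (∀ y ∈ Set.Icc y0 y2, H y ≠ 0) →
      (∀ y ∈ Set.Icc y0 y2, ∀ y'' ∈ Set.uIcc yr y, ‖H y''‖ ≤ ‖H y‖) →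
      (∀ y ∈ Set.Icc y0 y2, ‖f y‖ ≤ X * Real.cosh (A * (y - yr))) →
      (∀ y ∈ Set.Icc y0 y2,
        ‖(H y)⁻¹ * ∫ t in yr..y, H t * f t‖ ≤ (C / A) * X * Real.cosh (A * (y - yr)))
      ∧
      (∀ y ∈ Set.Icc y0 y2,
        ‖∫ s in yr..y, (H s)⁻¹ * ∫ t in yr..s, H t * f t‖
          ≤ (C / A ^ 2) * X * Real.cosh (A * (y - yr))) := by
  refine ⟨1, one_pos, fun y0 y2 yr A H f X h0r hr2 hA hX _ _ hH0 hHmono hf => ?_⟩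
  have hsub : ∀ y ∈ Set.Icc y0 y2, Set.uIcc yr y ⊆ Set.Icc y0 y2 :=
    fun y hy => Set.uIcc_subset_Icc ⟨h0r, hr2⟩ hy
  have hS₁ : ∀ y ∈ Set.Icc y0 y2,
      ‖(H y)⁻¹ * ∫ t in yr..y, H t * f t‖ ≤ X / A * cosh (A * (y - yr)) := fun y hy =>
    norm_inv_mul_integral_mul_le_of_norm_le_mul_cosh hA hX (hH0 y hy) (hHmono y hy)
      fun t ht => hf t (hsub y hy ht)
  refine ⟨fun y hy => ?_, fun y hy => ?_⟩
  · calc _ ≤ X / A * cosh (A * (y - yr)) := hS₁ y hy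
      _ = 1 / A * X * cosh (A * (y - yr)) := by ring
  · calc _ ≤ X / A / A * cosh (A * (y - yr)) :=
          norm_integral_le_of_norm_le_mul_cosh hA (by positivity)
            fun s hs => hS₁ s (hsub y hy (Set.uIoc_subset_uIcc hs))
      _ = 1 / A ^ 2 * X * cosh (A * (y - yr)) := by ring
end

section
/- Let b : 𝕋 → ℝ be continuous and positive, and let (Ĥ₁, Ĥ₂) satisfy the divergence-free relation iα Ĥ₁ + ∂y Ĥ₂ = 0 on a finite interval [y₁,y₂] with Ĥ₂(y₁)=Ĥ₂(y₂)=0. Then there is a constant C > 0, independent of α ≠ 0, such that C^{-1}‖Ĥ₁‖_{L²} ≤ ‖Ĥ₁ − i(αb)^{-1} b' Ĥ₂‖_{L²} ≤ C‖Ĥ₁‖_{L²}. -/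
/-!
Put `G = Ĥ₁ - i(αb)⁻¹b'Ĥ₂` and `F = Ĥ₂ / b`. Since `Ĥ₂' = -iαĤ₁`, one has `F' = -iαG / b`, i.e.
`G = (ib/α) F'`, and `Ĥ₂' = b'F + bF'`. With `m ≤ b ≤ M` and `|b'| ≤ K` on `[y₁, y₂]`:

* `‖G‖ ≤ ‖Ĥ₁‖ + K/(m|α|) ‖Ĥ₂‖`, and Poincaré gives `‖Ĥ₂‖ ≤ (y₂ - y₁) ‖Ĥ₂'‖ = (y₂ - y₁)|α| ‖Ĥ₁‖`;
* `|α| ‖Ĥ₁‖ = ‖Ĥ₂'‖ ≤ K ‖F‖ + M ‖F'‖ ≤ (K(y₂ - y₁) + M) ‖F'‖ ≤ (K(y₂ - y₁) + M) |α|/m ‖G‖`,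
  by Poincaré for `F` (which vanishes at `y₁`).

In both chains the powers of `α` cancel, so the constants depend on `b` only.
-/

open MeasureTheory Set

section IntervalL2Norm

variable {E F G : Type*} [NormedAddCommGroup E] [NormedAddCommGroup F] [NormedAddCommGroup G]
  {a b : ℝ}

noncomputable def intervalL2Norm (a b : ℝ) (f : ℝ → E) : ℝ := √(∫ y in a..b, ‖f y‖ ^ 2)

lemma intervalL2Norm_nonneg (a b : ℝ) (f : ℝ → E) : 0 ≤ intervalL2Norm a b f := Real.sqrt_nonneg _

lemma intervalL2Norm_sq (hab : a ≤ b) (f : ℝ → E) :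
    intervalL2Norm a b f ^ 2 = ∫ y in a..b, ‖f y‖ ^ 2 :=
  Real.sq_sqrt (intervalIntegral.integral_nonneg hab fun _ _ => by positivity)

lemma ContinuousOn.memLp_restrict_Ioc {u : ℝ → E} (hu : ContinuousOn u (Icc a b))
    (p : ENNReal) : MemLp u p (volume.restrict (Ioc a b)) := by
  obtain ⟨C, hC⟩ := isCompact_Icc.exists_bound_of_continuousOn hu
  refine MemLp.of_bound ((hu.mono Ioc_subset_Icc_self).aestronglyMeasurable measurableSet_Ioc) C ?_
  exact (ae_restrict_iff' measurableSet_Ioc).2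
    (ae_of_all _ fun y hy => hC y (Ioc_subset_Icc_self hy))

lemma integral_norm_mul_norm_le_intervalL2Norm_mul (hab : a ≤ b) {u : ℝ → E} {v : ℝ → F}
    (hu : ContinuousOn u (Icc a b)) (hv : ContinuousOn v (Icc a b)) :
    ∫ y in a..b, ‖u y‖ * ‖v y‖ ≤ intervalL2Norm a b u * intervalL2Norm a b v := by
  have key := integral_mul_le_Lp_mul_Lq_of_nonneg (μ := volume.restrict (Ioc a b))
    Real.HolderConjugate.two_two (ae_of_all _ fun y => norm_nonneg (u y))
    (ae_of_all _ fun y => norm_nonneg (v y))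
    (by simpa using hu.norm.memLp_restrict_Ioc 2) (by simpa using hv.norm.memLp_restrict_Ioc 2)
  simpa only [intervalL2Norm, intervalIntegral.integral_of_le hab, Real.sqrt_eq_rpow,
    Real.rpow_two] using key

lemma intervalL2Norm_le_add_of_norm_le (hab : a ≤ b) {u : ℝ → E} {v : ℝ → F} {w : ℝ → G}
    {p q : ℝ} (hp : 0 ≤ p) (hq : 0 ≤ q) (hu : ContinuousOn u (Icc a b))
    (hv : ContinuousOn v (Icc a b)) (hw : ContinuousOn w (Icc a b))
    (h : ∀ y ∈ Icc a b, ‖u y‖ ≤ p * ‖v y‖ + q * ‖w y‖) :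
    intervalL2Norm a b u ≤ p * intervalL2Norm a b v + q * intervalL2Norm a b w := by
  have hv2 : IntervalIntegrable (fun y => ‖v y‖ ^ 2) volume a b :=
    (hv.norm.pow 2).intervalIntegrable_of_Icc hab
  have hw2 : IntervalIntegrable (fun y => ‖w y‖ ^ 2) volume a b :=
    (hw.norm.pow 2).intervalIntegrable_of_Icc hab
  have hvw : IntervalIntegrable (fun y => ‖v y‖ * ‖w y‖) volume a b :=
    (hv.norm.mul hw.norm).intervalIntegrable_of_Icc hab
  have hpoint : ∀ y ∈ Icc a b, ‖u y‖ ^ 2 ≤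
      p ^ 2 * ‖v y‖ ^ 2 + 2 * p * q * (‖v y‖ * ‖w y‖) + q ^ 2 * ‖w y‖ ^ 2 := fun y hy => by
    nlinarith [h y hy, norm_nonneg (u y)]
  have hint : ∫ y in a..b, ‖u y‖ ^ 2 ≤
      p ^ 2 * (∫ y in a..b, ‖v y‖ ^ 2) + 2 * p * q * (∫ y in a..b, ‖v y‖ * ‖w y‖)
        + q ^ 2 * ∫ y in a..b, ‖w y‖ ^ 2 := by
    rw [← intervalIntegral.integral_const_mul, ← intervalIntegral.integral_const_mul,
      ← intervalIntegral.integral_const_mul, ← intervalIntegral.integral_add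
        (hv2.const_mul _) (hvw.const_mul _), ← intervalIntegral.integral_add
        ((hv2.const_mul _).add (hvw.const_mul _)) (hw2.const_mul _)]
    exact intervalIntegral.integral_mono_on hab ((hu.norm.pow 2).intervalIntegrable_of_Icc hab)
      (((hv2.const_mul _).add (hvw.const_mul _)).add (hw2.const_mul _)) hpoint
  have hcs := integral_norm_mul_norm_le_intervalL2Norm_mul hab hv hw
  rw [← intervalL2Norm_sq hab, ← intervalL2Norm_sq hab, ← intervalL2Norm_sq hab] at hint
  have hv0 := intervalL2Norm_nonneg a b v
  have hw0 := intervalL2Norm_nonneg a b w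
  rw [← pow_le_pow_iff_left₀ (intervalL2Norm_nonneg a b u) (by positivity) two_ne_zero]
  nlinarith [mul_le_mul_of_nonneg_left hcs (by positivity : 0 ≤ 2 * p * q)]

lemma intervalL2Norm_le_mul_of_norm_le (hab : a ≤ b) {u : ℝ → E} {v : ℝ → F} {p : ℝ} (hp : 0 ≤ p)
    (hu : ContinuousOn u (Icc a b)) (hv : ContinuousOn v (Icc a b))
    (h : ∀ y ∈ Icc a b, ‖u y‖ ≤ p * ‖v y‖) :
    intervalL2Norm a b u ≤ p * intervalL2Norm a b v := by
  simpa using intervalL2Norm_le_add_of_norm_le hab hp le_rfl hu hv hv fun y hy => by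
    simpa using h y hy

lemma intervalL2Norm_const_one :
    intervalL2Norm a b (fun _ => (1 : ℝ)) = √(b - a) := by
  simp [intervalL2Norm]

theorem intervalL2Norm_le_sub_mul_intervalL2Norm_deriv [NormedSpace ℝ E] [CompleteSpace E]
    (hab : a ≤ b) {f f' : ℝ → E} (hf : ∀ y ∈ Icc a b, HasDerivAt f (f' y) y)
    (hf' : ContinuousOn f' (Icc a b)) (ha : f a = 0) :
    intervalL2Norm a b f ≤ (b - a) * intervalL2Norm a b f' := by
  have hsup : ∀ y ∈ Icc a b, ‖f y‖ ≤ ∫ t in a..b, ‖f' t‖ := by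
    intro y hy
    have hsub : Icc a y ⊆ Icc a b := Icc_subset_Icc_right hy.2
    have hftc : ∫ t in a..y, f' t = f y := by
      rw [intervalIntegral.integral_eq_sub_of_hasDerivAt
        (fun t ht => hf t (hsub (uIcc_of_le hy.1 ▸ ht)))
        ((hf'.mono hsub).intervalIntegrable_of_Icc hy.1), ha, sub_zero]
    calc ‖f y‖ = ‖∫ t in a..y, f' t‖ := by rw [hftc]
      _ ≤ ∫ t in a..y, ‖f' t‖ := intervalIntegral.norm_integral_le_integral_norm hy.1
      _ ≤ ∫ t in a..b, ‖f' t‖ :=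
        intervalIntegral.integral_mono_interval le_rfl hy.1 hy.2
          (ae_of_all _ fun _ => norm_nonneg _) (hf'.norm.intervalIntegrable_of_Icc hab)
  have hcs : ∫ t in a..b, ‖f' t‖ ≤ intervalL2Norm a b f' * √(b - a) := by
    simpa [intervalL2Norm_const_one] using
      integral_norm_mul_norm_le_intervalL2Norm_mul hab hf' (continuousOn_const (c := (1 : ℝ)))
  have hfc : ContinuousOn f (Icc a b) := fun y hy => (hf y hy).continuousAt.continuousWithinAt
  have hf'0 := intervalL2Norm_nonneg a b f'
  calc intervalL2Norm a b f
      ≤ (intervalL2Norm a b f' * √(b - a)) * intervalL2Norm a b (fun _ => (1 : ℝ)) :=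
        intervalL2Norm_le_mul_of_norm_le hab (by positivity) hfc continuousOn_const
          fun y hy => by simpa using (hsup y hy).trans hcs
    _ = (b - a) * intervalL2Norm a b f' := by
        rw [intervalL2Norm_const_one, mul_assoc, Real.mul_self_sqrt (sub_nonneg.2 hab)]
        ring

end IntervalL2Norm

noncomputable def correctedH1 (α : ℝ) (b b' : ℝ → ℝ) (H1 H2 : ℝ → ℂ) (y : ℝ) : ℂ :=
  H1 y - Complex.I / ((α : ℂ) * (b y : ℂ)) * (b' y : ℂ) * H2 y

section DivergenceFree

variable {y1 y2 α m M K : ℝ} {b b' : ℝ → ℝ} {H1 H2 H2' : ℝ → ℂ}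

lemma continuousOn_correctedH1 {s : Set ℝ} (hα : α ≠ 0) (hb : ContinuousOn b s)
    (hb0 : ∀ y ∈ s, b y ≠ 0) (hb' : ContinuousOn b' s) (hH1 : ContinuousOn H1 s)
    (hH2 : ContinuousOn H2 s) : ContinuousOn (correctedH1 α b b' H1 H2) s := by
  have hbC : ContinuousOn (fun y => (b y : ℂ)) s := Complex.continuous_ofReal.comp_continuousOn hb
  have hb'C : ContinuousOn (fun y => (b' y : ℂ)) s :=
    Complex.continuous_ofReal.comp_continuousOn hb'
  exact hH1.sub (((continuousOn_const.div (continuousOn_const.mul hbC) fun y hy =>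
    mul_ne_zero (Complex.ofReal_ne_zero.2 hα) (Complex.ofReal_ne_zero.2 (hb0 y hy))).mul
      hb'C).mul hH2)

lemma norm_correctedH1_le {y : ℝ} (hm : 0 < m) (hby : m ≤ b y) (hb'y : |b' y| ≤ K) :
    ‖correctedH1 α b b' H1 H2 y‖ ≤ ‖H1 y‖ + K / m / |α| * ‖H2 y‖ := by
  have hcoef : |b' y| / |b y| ≤ K / m := by
    rw [abs_of_pos (hm.trans_le hby)]
    exact div_le_div₀ ((abs_nonneg _).trans hb'y) hb'y hm hby
  calc ‖correctedH1 α b b' H1 H2 y‖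
      ≤ ‖H1 y‖ + ‖Complex.I / ((α : ℂ) * (b y : ℂ)) * (b' y : ℂ) * H2 y‖ := norm_sub_le _ _
    _ = ‖H1 y‖ + |b' y| / |b y| / |α| * ‖H2 y‖ := by
      simp only [norm_mul, norm_div, Complex.norm_I, Complex.norm_real, Real.norm_eq_abs]
      ring
    _ ≤ ‖H1 y‖ + K / m / |α| * ‖H2 y‖ := by gcongr

lemma norm_eq_of_I_mul_add_eq_zero {y : ℝ} (h : Complex.I * α * H1 y + H2' y = 0) :
    ‖H2' y‖ = |α| * ‖H1 y‖ := by
  rw [eq_neg_of_add_eq_zero_right h]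
  simp

lemma quotient_deriv_eq_correctedH1 {y : ℝ} (hα : α ≠ 0) (hby : b y ≠ 0)
    (h : Complex.I * α * H1 y + H2' y = 0) :
    (H2' y * b y - H2 y * b' y) / (b y : ℂ) ^ 2 =
      -(Complex.I * α) / b y * correctedH1 α b b' H1 H2 y := by
  have hαC : (α : ℂ) ≠ 0 := Complex.ofReal_ne_zero.2 hα
  have hbC : (b y : ℂ) ≠ 0 := Complex.ofReal_ne_zero.2 hby
  rw [eq_neg_of_add_eq_zero_right h, correctedH1]
  field_simp
  linear_combination (-(H2 y * b' y)) * Complex.I_sq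

theorem intervalL2Norm_correctedH1_le (hy : y1 ≤ y2) (hα : α ≠ 0) (hm : 0 < m)
    (hbm : ∀ y ∈ Icc y1 y2, m ≤ b y) (hb'K : ∀ y ∈ Icc y1 y2, |b' y| ≤ K)
    (hb : ContinuousOn b (Icc y1 y2)) (hb' : ContinuousOn b' (Icc y1 y2))
    (hH1 : ContinuousOn H1 (Icc y1 y2)) (hH2' : ContinuousOn H2' (Icc y1 y2))
    (hH2 : ∀ y ∈ Icc y1 y2, HasDerivAt H2 (H2' y) y)
    (hdiv : ∀ y ∈ Icc y1 y2, Complex.I * α * H1 y + H2' y = 0) (h2 : H2 y1 = 0) :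
    intervalL2Norm y1 y2 (correctedH1 α b b' H1 H2) ≤
      (1 + K * (y2 - y1) / m) * intervalL2Norm y1 y2 H1 := by
  have hK : 0 ≤ K := (abs_nonneg _).trans (hb'K y1 (left_mem_Icc.2 hy))
  have hH2c : ContinuousOn H2 (Icc y1 y2) :=
    fun y hy => (hH2 y hy).continuousAt.continuousWithinAt
  have hGc := continuousOn_correctedH1 hα hb (fun y hy => (hm.trans_le (hbm y hy)).ne') hb' hH1 hH2c
  have hH2N : intervalL2Norm y1 y2 H2 ≤ (y2 - y1) * (|α| * intervalL2Norm y1 y2 H1) :=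
    (intervalL2Norm_le_sub_mul_intervalL2Norm_deriv hy hH2 hH2' h2).trans <|
      mul_le_mul_of_nonneg_left (intervalL2Norm_le_mul_of_norm_le hy (abs_nonneg α) hH2' hH1
        fun y hy => (norm_eq_of_I_mul_add_eq_zero (hdiv y hy)).le) (sub_nonneg.2 hy)
  calc intervalL2Norm y1 y2 (correctedH1 α b b' H1 H2)
      ≤ 1 * intervalL2Norm y1 y2 H1 + K / m / |α| * intervalL2Norm y1 y2 H2 :=
        intervalL2Norm_le_add_of_norm_le hy zero_le_one (by positivity) hGc hH1 hH2c
          fun y hy => by simpa using norm_correctedH1_le hm (hbm y hy) (hb'K y hy)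
    _ ≤ 1 * intervalL2Norm y1 y2 H1 +
          K / m / |α| * ((y2 - y1) * (|α| * intervalL2Norm y1 y2 H1)) := by gcongr
    _ = (1 + K * (y2 - y1) / m) * intervalL2Norm y1 y2 H1 := by
        field_simp [abs_ne_zero.2 hα]

lemma norm_quotient_deriv_le {y : ℝ} (hα : α ≠ 0) (hm : 0 < m) (hby : m ≤ b y)
    (h : Complex.I * α * H1 y + H2' y = 0) :
    ‖(H2' y * b y - H2 y * b' y) / (b y : ℂ) ^ 2‖ ≤ |α| / m * ‖correctedH1 α b b' H1 H2 y‖ := by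
  have hbpos := hm.trans_le hby
  rw [quotient_deriv_eq_correctedH1 hα hbpos.ne' h]
  simp only [norm_mul, norm_div, norm_neg, Complex.norm_I, Complex.norm_real, Real.norm_eq_abs,
    one_mul, abs_of_pos hbpos]
  gcongr

lemma norm_le_norm_quotient_add_norm_quotient_deriv {y : ℝ} (hα : α ≠ 0) (hby : 0 < b y)
    (hbM : b y ≤ M) (hb'K : |b' y| ≤ K) (h : Complex.I * α * H1 y + H2' y = 0) :
    ‖H1 y‖ ≤ K / |α| * ‖H2 y / (b y : ℂ)‖ +
      M / |α| * ‖(H2' y * b y - H2 y * b' y) / (b y : ℂ) ^ 2‖ := by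
  have hbC : (b y : ℂ) ≠ 0 := Complex.ofReal_ne_zero.2 hby.ne'
  have hsplit : H2' y =
      b' y * (H2 y / b y) + b y * ((H2' y * b y - H2 y * b' y) / (b y : ℂ) ^ 2) := by
    field_simp
    ring
  generalize (H2' y * b y - H2 y * b' y) / (b y : ℂ) ^ 2 = q at hsplit ⊢
  have hH2' : |α| * ‖H1 y‖ ≤ K * ‖H2 y / (b y : ℂ)‖ + M * ‖q‖ := by
    rw [← norm_eq_of_I_mul_add_eq_zero h, hsplit]
    refine (norm_add_le _ _).trans ?_
    simp only [norm_mul, Complex.norm_real, Real.norm_eq_abs, abs_of_pos hby]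
    have hM : 0 ≤ M := hby.le.trans hbM
    gcongr
  rw [div_mul_eq_mul_div, div_mul_eq_mul_div, ← add_div, le_div_iff₀ (abs_pos.2 hα)]
  linarith

theorem intervalL2Norm_le_mul_intervalL2Norm_correctedH1 (hy : y1 ≤ y2) (hα : α ≠ 0)
    (hm : 0 < m) (hbm : ∀ y ∈ Icc y1 y2, m ≤ b y) (hbM : ∀ y ∈ Icc y1 y2, b y ≤ M)
    (hb'K : ∀ y ∈ Icc y1 y2, |b' y| ≤ K)
    (hb : ∀ y ∈ Icc y1 y2, HasDerivAt b (b' y) y) (hb' : ContinuousOn b' (Icc y1 y2))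
    (hH1 : ContinuousOn H1 (Icc y1 y2)) (hH2' : ContinuousOn H2' (Icc y1 y2))
    (hH2 : ∀ y ∈ Icc y1 y2, HasDerivAt H2 (H2' y) y)
    (hdiv : ∀ y ∈ Icc y1 y2, Complex.I * α * H1 y + H2' y = 0) (h2 : H2 y1 = 0) :
    intervalL2Norm y1 y2 H1 ≤
      (K * (y2 - y1) + M) / m * intervalL2Norm y1 y2 (correctedH1 α b b' H1 H2) := by
  have hL : 0 ≤ y2 - y1 := sub_nonneg.2 hy
  have hbpos : ∀ y ∈ Icc y1 y2, 0 < b y := fun y hy => hm.trans_le (hbm y hy)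
  have hb0 : ∀ y ∈ Icc y1 y2, (b y : ℂ) ≠ 0 :=
    fun y hy => Complex.ofReal_ne_zero.2 (hbpos y hy).ne'
  have hK : 0 ≤ K := (abs_nonneg _).trans (hb'K y1 (left_mem_Icc.2 hy))
  have hM : 0 ≤ M := (hbpos y1 (left_mem_Icc.2 hy)).le.trans (hbM y1 (left_mem_Icc.2 hy))
  have hbc : ContinuousOn b (Icc y1 y2) := fun y hy => (hb y hy).continuousAt.continuousWithinAt
  have hbC : ContinuousOn (fun y => (b y : ℂ)) (Icc y1 y2) :=
    Complex.continuous_ofReal.comp_continuousOn hbc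
  have hH2c : ContinuousOn H2 (Icc y1 y2) :=
    fun y hy => (hH2 y hy).continuousAt.continuousWithinAt
  set G := correctedH1 α b b' H1 H2
  have hGc : ContinuousOn G (Icc y1 y2) :=
    continuousOn_correctedH1 hα hbc (fun y hy => (hbpos y hy).ne') hb' hH1 hH2c
  set F := fun y => H2 y / (b y : ℂ)
  set F' := fun y => (H2' y * b y - H2 y * b' y) / (b y : ℂ) ^ 2
  have hF : ∀ y ∈ Icc y1 y2, HasDerivAt F (F' y) y :=
    fun y hy => (hH2 y hy).div (hb y hy).ofReal_comp (hb0 y hy)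
  have hFc : ContinuousOn F (Icc y1 y2) := hH2c.div hbC hb0
  have hF'c : ContinuousOn F' (Icc y1 y2) :=
    ((hH2'.mul hbC).sub (hH2c.mul (Complex.continuous_ofReal.comp_continuousOn hb'))).div
      (hbC.pow 2) fun y hy => pow_ne_zero 2 (hb0 y hy)
  calc intervalL2Norm y1 y2 H1
      ≤ K / |α| * intervalL2Norm y1 y2 F + M / |α| * intervalL2Norm y1 y2 F' :=
        intervalL2Norm_le_add_of_norm_le hy (by positivity) (by positivity) hH1 hFc hF'c
          fun y hy => norm_le_norm_quotient_add_norm_quotient_deriv hα (hbpos y hy) (hbM y hy)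
            (hb'K y hy) (hdiv y hy)
    _ ≤ K / |α| * ((y2 - y1) * intervalL2Norm y1 y2 F') + M / |α| * intervalL2Norm y1 y2 F' := by
        gcongr
        exact intervalL2Norm_le_sub_mul_intervalL2Norm_deriv hy hF hF'c (by simp [F, h2])
    _ = (K * (y2 - y1) + M) / |α| * intervalL2Norm y1 y2 F' := by ring
    _ ≤ (K * (y2 - y1) + M) / |α| * (|α| / m * intervalL2Norm y1 y2 G) := by
        gcongr
        exact intervalL2Norm_le_mul_of_norm_le hy (by positivity) hF'c hGc
          fun y hy => norm_quotient_deriv_le hα hm (hbm y hy) (hdiv y hy)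
    _ = (K * (y2 - y1) + M) / m * intervalL2Norm y1 y2 G := by
        field_simp

end DivergenceFree

/-- Norm equivalence `‖Ĥ₁‖_{L²} ∼ ‖Ĥ₁ - i(αb)⁻¹b'Ĥ₂‖_{L²}` for
divergence-free `(Ĥ₁,Ĥ₂)` (`iαĤ₁ + ∂yĤ₂ = 0`) with Dirichlet boundary values of `Ĥ₂`,
with a constant `C` independent of `α ≠ 0`. -/
theorem stmt_15
    (y1 y2 : ℝ) (hy : y1 < y2)
    (b b' : ℝ → ℝ)
    (hb : ∀ y ∈ Set.Icc y1 y2, HasDerivAt b (b' y) y)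
    (hbpos : ∀ y ∈ Set.Icc y1 y2, 0 < b y)
    (hb'c : ContinuousOn b' (Set.Icc y1 y2)) :
    ∃ C > 0, ∀ (α : ℝ), α ≠ 0 → ∀ (H1 H2 H2' : ℝ → ℂ),
      Continuous H1 → Continuous H2 → Continuous H2' →
      (∀ y ∈ Set.Icc y1 y2, HasDerivAt H2 (H2' y) y) →
      (∀ y ∈ Set.Icc y1 y2, Complex.I * (α : ℂ) * H1 y + H2' y = 0) →
      H2 y1 = 0 → H2 y2 = 0 →
      C⁻¹ * Real.sqrt (∫ y in y1..y2, ‖H1 y‖ ^ 2)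
          ≤ Real.sqrt (∫ y in y1..y2,
              ‖H1 y - Complex.I / ((α : ℂ) * (b y : ℂ)) * (b' y : ℂ) * H2 y‖ ^ 2)
        ∧
      Real.sqrt (∫ y in y1..y2,
              ‖H1 y - Complex.I / ((α : ℂ) * (b y : ℂ)) * (b' y : ℂ) * H2 y‖ ^ 2)
          ≤ C * Real.sqrt (∫ y in y1..y2, ‖H1 y‖ ^ 2) := by
  have hbc : ContinuousOn b (Icc y1 y2) := fun y hy => (hb y hy).continuousAt.continuousWithinAt
  obtain ⟨y0, hy0, hmin⟩ := isCompact_Icc.exists_isMinOn (nonempty_Icc.2 hy.le) hbc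
  obtain ⟨M, hM⟩ := isCompact_Icc.exists_bound_of_continuousOn hbc
  obtain ⟨K, hK⟩ := isCompact_Icc.exists_bound_of_continuousOn hb'c
  have hm : 0 < b y0 := hbpos y0 hy0
  have hK0 : 0 ≤ K := (norm_nonneg _).trans (hK y1 (left_mem_Icc.2 hy.le))
  set C₁ := (K * (y2 - y1) + M) / b y0
  set C₂ := 1 + K * (y2 - y1) / b y0
  have hL : 0 ≤ y2 - y1 := sub_nonneg.2 hy.le
  have hC₂ : 0 < C₂ := by positivity
  refine ⟨max C₁ C₂, lt_max_of_lt_right hC₂, fun α hα H1 H2 H2' hH1 _ hH2' hd hdiv h2 _ => ?_⟩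
  have hlow := intervalL2Norm_le_mul_intervalL2Norm_correctedH1 hy.le hα hm hmin
    (fun y hy => (le_abs_self _).trans (hM y hy)) hK hb hb'c hH1.continuousOn hH2'.continuousOn
    hd hdiv h2
  have hup := intervalL2Norm_correctedH1_le hy.le hα hm hmin hK hbc hb'c hH1.continuousOn
    hH2'.continuousOn hd hdiv h2
  have hG0 := intervalL2Norm_nonneg y1 y2 (correctedH1 α b b' H1 H2)
  have hH0 := intervalL2Norm_nonneg y1 y2 H1
  constructor
  · rw [inv_mul_le_iff₀ (lt_max_of_lt_right hC₂)]
    exact hlow.trans (mul_le_mul_of_nonneg_right (le_max_left _ _) hG0)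
  · exact hup.trans (mul_le_mul_of_nonneg_right (le_max_right _ _) hH0)
end
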